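/- arXiv:1606.08349 — 3 statements merged into one kernel-verified Lean document; each statement's English description precedes it below -/
import Mathlib

section
/- Let A be a Banach algebra, φ a character on A, and suppose A is approximately φ-inner amenable. If the second dual A** (with an Arens product) is approximately biflat, then A is approximately left φ-amenable. -/
set_option synthInstance.maxHeartbeats 1000000
set_option maxHeartbeats 4000000
set_option maxSynthPendingDepth 3
set_option linter.unusedSectionVars false
set_option linter.unusedVariables false
open scoped Topology
open Filter ContinuousLinearMap

noncomputable section

namespace ApproxBiflat

variable (A : Type*) [NonUnitalNormedRing A] [NormedSpace ℂ A]
  [IsScalarTower ℂ A A] [SMulCommClass ℂ A A]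

/-- The dual space `A*` of a Banach algebra `A`. -/
abbrev Dual' := A →L[ℂ] ℂ

/-- Bounded bilinear forms on `A × A`; this is the canonical isometric model of the dual
`(A ⊗_p A)*` of the projective tensor product `A ⊗_p A`. -/
abbrev BilForm := A →L[ℂ] A →L[ℂ] ℂ

/-- The canonical model of the second dual `(A ⊗_p A)**` of the projective tensor product. -/
abbrev TensorBidual := (A →L[ℂ] A →L[ℂ] ℂ) →L[ℂ] ℂ

/-- The bidual of a Banach algebra, as a Banach space. -/
abbrev Bidual := (A →L[ℂ] ℂ) →L[ℂ] ℂ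

variable {A}

/-- The left action of `A` on `A* = (A →L ℂ)`: `(a · f) x = f (x * a)`. -/
def dualLeft (a : A) : Dual' A →L[ℂ] Dual' A :=
  (compL ℂ A A ℂ).flip ((ContinuousLinearMap.mul ℂ A).flip a)

/-- The right action of `A` on `A*`: `(f · a) x = f (a * x)`. -/
def dualRight (a : A) : Dual' A →L[ℂ] Dual' A :=
  (compL ℂ A A ℂ).flip (ContinuousLinearMap.mul ℂ A a)

@[simp] lemma dualLeft_apply (a : A) (f : Dual' A) (x : A) : dualLeft a f x = f (x * a) := rfl
@[simp] lemma dualRight_apply (a : A) (f : Dual' A) (x : A) : dualRight a f x = f (a * x) := rfl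

/-- The adjoint `π* : A* → (A ⊗_p A)*` of the multiplication map
`π : A ⊗_p A → A`, in the bilinear-form model: `(π* f) a b = f (a * b)`. -/
def piStar : Dual' A →L[ℂ] BilForm A :=
  ((compL ℂ A (A →L[ℂ] A) (A →L[ℂ] ℂ)).flip (ContinuousLinearMap.mul ℂ A)).comp
    (compL ℂ A A ℂ)

@[simp] lemma piStar_apply (f : Dual' A) (a b : A) : piStar f a b = f (a * b) := rfl

/-- The left action of `A` on `(A ⊗_p A)*`: `(a · T) b c = T b (c * a)`. -/
def bilLeft (a : A) : BilForm A →L[ℂ] BilForm A :=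
  compL ℂ A (A →L[ℂ] ℂ) (A →L[ℂ] ℂ) (dualLeft a)

/-- The right action of `A` on `(A ⊗_p A)*`: `(T · a) b c = T (a * b) c`. -/
def bilRight (a : A) : BilForm A →L[ℂ] BilForm A :=
  (compL ℂ A A (A →L[ℂ] ℂ)).flip (ContinuousLinearMap.mul ℂ A a)

@[simp] lemma bilLeft_apply (a : A) (T : BilForm A) (b c : A) :
    bilLeft a T b c = T b (c * a) := rfl
@[simp] lemma bilRight_apply (a : A) (T : BilForm A) (b c : A) :
    bilRight a T b c = T (a * b) c := rfl

/-- The left action of `A` on `(A ⊗_p A)**`: `a · m = m ∘ (T ↦ T · a)`. -/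
def tbLeft (a : A) (m : TensorBidual A) : TensorBidual A := m.comp (bilRight a)

/-- The right action of `A` on `(A ⊗_p A)**`: `m · a = m ∘ (T ↦ a · T)`. -/
def tbRight (m : TensorBidual A) (a : A) : TensorBidual A := m.comp (bilLeft a)

/-- The elementary tensor `a ⊗ b`, viewed canonically inside `(A ⊗_p A)**`. -/
def dyad (a b : A) : TensorBidual A :=
  (ContinuousLinearMap.apply ℂ ℂ b).comp (ContinuousLinearMap.apply ℂ (A →L[ℂ] ℂ) a)

@[simp] lemma dyad_apply (a b : A) (T : BilForm A) : dyad a b T = T a b := rfl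

variable (A) in
/-- The canonical isometric image of the projective tensor product `A ⊗_p A` inside its bidual
`(A ⊗_p A)**`: the closure of the linear span of the elementary tensors. -/
def tensorSpan : Submodule ℂ (TensorBidual A) :=
  (Submodule.span ℂ {m : TensorBidual A | ∃ a b : A, m = dyad a b}).topologicalClosure

/-- The double adjoint `π** : (A ⊗_p A)** → A**` of the multiplication map. -/
def piStarStar (m : TensorBidual A) : Bidual A := m.comp piStar

/-- `ρ : (A ⊗_p A)* → A*` is a morphism of Banach `A`-bimodules. -/
def IsBimodMorphism (ρ : BilForm A →L[ℂ] Dual' A) : Prop :=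
  ∀ (a : A) (T : BilForm A),
    ρ (bilLeft a T) = dualLeft a (ρ T) ∧ ρ (bilRight a T) = dualRight a (ρ T)

variable (A)

/-- A Banach algebra `A` is **biflat** if there is a bounded `A`-bimodule morphism
`ρ : (A ⊗_p A)* → A*` with `ρ ∘ π* = id`. -/
def Biflat : Prop :=
  ∃ ρ : BilForm A →L[ℂ] Dual' A, IsBimodMorphism ρ ∧ ∀ f : Dual' A, ρ (piStar f) = f

/-- A Banach algebra `A` is **approximately biflat** if there is a net `(ρ_α)` of bounded
`A`-bimodule morphisms `(A ⊗_p A)* → A*` with `ρ_α ∘ π* → id_{A*}` in the weak-star operator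
topology.  (Nets are encoded by filters in the standard way.) -/
def ApproximatelyBiflat : Prop :=
  ∃ l : Filter (BilForm A →L[ℂ] Dual' A), l.NeBot ∧
    (∀ᶠ ρ in l, IsBimodMorphism ρ) ∧
    ∀ (f : Dual' A) (a : A), Tendsto (fun ρ => ρ (piStar f) a) l (𝓝 (f a))

/-- A Banach algebra `A` is **pseudo-amenable** if there is a net `(m_α)` in `A ⊗_p A`
(realized isometrically inside `(A ⊗_p A)**` as `tensorSpan A`) such that
`a · m_α - m_α · a → 0` and `π(m_α) a → a` for every `a ∈ A`. -/
def PseudoAmenable : Prop :=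
  ∃ l : Filter (TensorBidual A), l.NeBot ∧
    (∀ᶠ m in l, m ∈ tensorSpan A) ∧
    (∀ a : A, Tendsto (fun m => tbLeft a m - tbRight m a) l (𝓝 0)) ∧
    ∀ a : A, Tendsto (fun m => (piStarStar m).comp (dualLeft a)) l
      (𝓝 (NormedSpace.inclusionInDoubleDual ℂ A a))

/-- `A` has a (two-sided, not necessarily bounded) approximate identity. -/
def HasApproximateIdentity : Prop :=
  ∃ l : Filter A, l.NeBot ∧
    ∀ a : A, Tendsto (fun e => a * e) l (𝓝 a) ∧ Tendsto (fun e => e * a) l (𝓝 a)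

end ApproxBiflat
namespace ApproxBiflat

section Arens

variable {A : Type*} [NonUnitalNormedRing A] [NormedSpace ℂ A]
  [IsScalarTower ℂ A A] [SMulCommClass ℂ A A]

/-- The auxiliary map of the first Arens product: for `G ∈ A**`,
`arensAux G : A* → A*` is `f ↦ G ⋄ f`, where `(G ⋄ f) (a) = G (f · a)` and `(f · a) b = f (a b)`. -/
def arensAux (G : Bidual A) : Dual' A →L[ℂ] Dual' A :=
  (compL ℂ A (A →L[ℂ] ℂ) ℂ G).comp piStar

@[simp] lemma arensAux_apply (G : Bidual A) (f : Dual' A) (a : A) :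
    arensAux G f a = G (piStar f a) := rfl

/-- The first Arens product on the bidual `A**`: `(F □ G) (f) = F (G ⋄ f)`. -/
instance : Mul (Bidual A) := ⟨fun F G => F.comp (arensAux G)⟩

lemma arens_mul_apply (F G : Bidual A) (f : Dual' A) : (F * G) f = F (arensAux G f) := rfl

private lemma arensAux_add (G H : Bidual A) : arensAux (G + H) = arensAux G + arensAux H := by
  ext f a; simp

private lemma arensAux_smul (c : ℂ) (G : Bidual A) : arensAux (c • G) = c • arensAux G := by
  ext f a; simp

private lemma piStar_mul' (f : Dual' A) (a b : A) :
    piStar f (a * b) = piStar (piStar f a) b := by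
  ext c; simp [mul_assoc]

noncomputable instance : NonUnitalRing (Bidual A) :=
  { (inferInstance : AddCommGroup (Bidual A)) with
    mul := (· * ·)
    left_distrib := fun F G H => by
      ext f; simp [arens_mul_apply, arensAux_add]
    right_distrib := fun F G H => by
      ext f; simp [arens_mul_apply]
    zero_mul := fun F => by ext f; simp [arens_mul_apply]
    mul_zero := fun F => by
      ext f
      have : arensAux (0 : Bidual A) = 0 := by ext g a; simp
      simp [arens_mul_apply, this]
    mul_assoc := fun F G H => by
      ext f
      have key : arensAux G (arensAux H f) = arensAux (G * H) f := by
        ext a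
        have : piStar (arensAux H f) a = arensAux H (piStar f a) := by
          ext b; simp [piStar_mul']
        simp [this, arens_mul_apply]
      simp [arens_mul_apply, key] }

private lemma norm_piStar_app_le (f : Dual' A) (a : A) : ‖piStar f a‖ ≤ ‖f‖ * ‖a‖ := by
  refine ContinuousLinearMap.opNorm_le_bound _ (by positivity) fun b => ?_
  calc ‖f (a * b)‖ ≤ ‖f‖ * ‖a * b‖ := f.le_opNorm _
    _ ≤ ‖f‖ * (‖a‖ * ‖b‖) := by
        have := norm_mul_le a b
        have h0 : (0:ℝ) ≤ ‖f‖ := norm_nonneg _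
        nlinarith
    _ = ‖f‖ * ‖a‖ * ‖b‖ := by ring

private lemma norm_piStar_le' (f : Dual' A) : ‖piStar (A := A) f‖ ≤ ‖f‖ := by
  refine ContinuousLinearMap.opNorm_le_bound _ (norm_nonneg f) fun a => norm_piStar_app_le f a

private lemma norm_arensAux_le (G : Bidual A) : ‖arensAux G‖ ≤ ‖G‖ := by
  refine ContinuousLinearMap.opNorm_le_bound _ (norm_nonneg G) fun f => ?_
  have h1 : ‖arensAux G f‖ ≤ ‖G‖ * ‖piStar (A := A) f‖ := by
    exact ContinuousLinearMap.opNorm_comp_le G (piStar (A := A) f)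
  calc ‖arensAux G f‖ ≤ ‖G‖ * ‖piStar (A := A) f‖ := h1
    _ ≤ ‖G‖ * ‖f‖ := by
        have := norm_piStar_le' f
        have h0 : (0:ℝ) ≤ ‖G‖ := norm_nonneg _
        nlinarith

noncomputable instance : NonUnitalNormedRing (Bidual A) :=
  { (inferInstance : NormedAddCommGroup (Bidual A)),
    (inferInstance : NonUnitalRing (Bidual A)) with
    norm_mul_le := fun F G => by
      calc ‖F * G‖ ≤ ‖F‖ * ‖arensAux G‖ := ContinuousLinearMap.opNorm_comp_le _ _
        _ ≤ ‖F‖ * ‖G‖ := by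
            have := norm_arensAux_le G
            have h0 : (0:ℝ) ≤ ‖F‖ := norm_nonneg _
            nlinarith }

instance : IsScalarTower ℂ (Bidual A) (Bidual A) :=
  ⟨fun c F G => by
    show (c • F) * G = c • (F * G)
    ext f; simp [arens_mul_apply]⟩

instance : SMulCommClass ℂ (Bidual A) (Bidual A) :=
  ⟨fun c F G => by
    show c • (F * G) = F * (c • G)
    ext f; simp [arens_mul_apply, arensAux_smul]⟩

end Arens

end ApproxBiflat
namespace ApproxBiflat

section Characters

variable {A : Type*} [NonUnitalNormedRing A] [NormedSpace ℂ A]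
  [IsScalarTower ℂ A A] [SMulCommClass ℂ A A]

/-- A character on a Banach algebra: a non-zero multiplicative linear functional.
(Multiplicative linear functionals on Banach algebras are automatically continuous.) -/
def IsCharacter (φ : A →L[ℂ] ℂ) : Prop :=
  φ ≠ 0 ∧ ∀ a b : A, φ (a * b) = φ a * φ b

/-- `A` is approximately `φ`-inner amenable: there is a net `(a_α)` in `A` with
`a • a_α - a_α • a → 0` and `φ(a_α) → 1` for all `a ∈ A`. -/
def ApproximatelyPhiInnerAmenable (φ : A →L[ℂ] ℂ) : Prop :=
  ∃ l : Filter A, l.NeBot ∧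
    (∀ a : A, Filter.Tendsto (fun u => a * u - u * a) l (𝓝 0)) ∧
    Filter.Tendsto (fun u => φ u) l (𝓝 1)

/-- `A` is approximately left `φ`-amenable: there is a net `(m_α)` in `A` with
`a m_α - φ(a) m_α → 0` and `φ(m_α) → 1` for all `a ∈ A`. -/
def ApproximatelyLeftPhiAmenable (φ : A →L[ℂ] ℂ) : Prop :=
  ∃ l : Filter A, l.NeBot ∧
    (∀ a : A, Filter.Tendsto (fun u => a * u - φ a • u) l (𝓝 0)) ∧
    Filter.Tendsto (fun u => φ u) l (𝓝 1)

/-- `A` is left `φ`-amenable: there is `m ∈ A**` with `a · m = φ(a) m` for all `a ∈ A` and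
`φ̃(m) = 1`, where `φ̃` is the canonical extension of `φ` to `A**` and `a · m` is the canonical
left `A`-module action on `A** = (A*)*`, i.e. `(a · m)(f) = m (f · a)`. -/
def LeftPhiAmenable (φ : A →L[ℂ] ℂ) : Prop :=
  ∃ m : Bidual A, (∀ a : A, m.comp (dualRight a) = φ a • m) ∧ m φ = 1

end Characters

end ApproxBiflat

/-! If `A` were not approximately left `φ`-amenable, Hahn–Banach would put `φ` in the span of the
functionals `g · a - φ(a) g`. Let `κ` be the canonical embedding into the bidual. Tensoring with `φ`
and applying a bimodule morphism `ρ : (A** ⊗_p A**)* → A***` turns each such functional into a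
functional of commutators `a w - w a`, so `η = ρ(π* (κ φ)) ∘ κ` tends to `0` along the
inner-amenability net. As `η(v w) = φ(v) η(w) = φ(w) η(v)`, this forces `η = 0`, and approximate
biflatness of `A**` then gives `φ = 0`. -/

theorem Submodule.exists_dual_map_eq_zero_of_notMem_topologicalClosure
    {𝕜 F : Type*} [RCLike 𝕜] [NormedAddCommGroup F] [NormedSpace 𝕜 F] (M : Submodule 𝕜 F) {y : F}
    (hy : y ∉ M.topologicalClosure) :
    ∃ g : StrongDual 𝕜 F, (∀ x ∈ M, g x = 0) ∧ g y = 1 := by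
  set N := M.topologicalClosure
  have : IsClosed (N : Set F) := M.isClosed_topologicalClosure
  obtain ⟨f, hf⟩ := SeparatingDual.exists_eq_one (R := 𝕜) (x := N.mkQL y)
    (by simpa [Submodule.Quotient.mk_eq_zero] using hy)
  refine ⟨f.comp N.mkQL, fun x hx => ?_, hf⟩
  have : N.mkQL x = 0 := (Submodule.Quotient.mk_eq_zero N).2 (M.le_topologicalClosure hx)
  simp [this]

namespace ApproxBiflat

section

variable {A : Type*} [NonUnitalNormedRing A] [NormedSpace ℂ A]
  [IsScalarTower ℂ A A] [SMulCommClass ℂ A A]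

def leftPhiDefects (φ : A →L[ℂ] ℂ) : Submodule ℂ (Dual' A) :=
  Submodule.span ℂ (Set.range fun p : A × Dual' A => dualRight p.1 p.2 - φ p.1 • p.2)

theorem exists_norm_mul_sub_smul_lt_of_notMem_leftPhiDefects {φ : A →L[ℂ] ℂ} (hφ : φ ∉ leftPhiDefects φ) (S : Finset A)
    {ε : ℝ} (hε : 0 < ε) :
    ∃ v : A, (∀ a ∈ S, ‖a * v - φ a • v‖ < ε) ∧ ‖φ v - 1‖ < ε := by
  classical
  by_contra! hS
  let T : A →L[ℂ] (S → A) × ℂ :=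
    (ContinuousLinearMap.pi fun a : S => ContinuousLinearMap.mul ℂ A a - φ a • .id ℂ A).prod φ
  have hy : ((0, 1) : (S → A) × ℂ) ∉
      (LinearMap.range (T : A →ₗ[ℂ] (S → A) × ℂ)).topologicalClosure := by
    rw [← SetLike.mem_coe, Submodule.topologicalClosure_coe, Metric.mem_closure_iff]
    intro hclose
    obtain ⟨_, ⟨v, rfl⟩, hv⟩ := hclose ε hε
    refine (hS v fun a ha => ?_).not_gt ?_
    · calc ‖a * v - φ a • v‖ = ‖(T v - (0, 1)).1 ⟨a, ha⟩‖ := by simp [T]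
        _ ≤ ‖T v - (0, 1)‖ := (norm_le_pi_norm _ _).trans (norm_fst_le _)
        _ < ε := by rwa [← dist_eq_norm, dist_comm]
    · calc ‖φ v - 1‖ = ‖(T v - (0, 1)).2‖ := by simp [T]
        _ ≤ ‖T v - (0, 1)‖ := norm_snd_le _
        _ < ε := by rwa [← dist_eq_norm, dist_comm]
  obtain ⟨g, hgT, hg1⟩ :=
    Submodule.exists_dual_map_eq_zero_of_notMem_topologicalClosure _ hy
  let gA : S → Dual' A := fun a => (g.comp (.inl ℂ _ ℂ)).comp (.single ℂ (fun _ => A) a)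
  have hinr : g.comp (.inr ℂ (S → A) ℂ) = .id ℂ ℂ := ContinuousLinearMap.ext_ring hg1
  have hdecomp : φ + ∑ a : S, (dualRight (a : A) (gA a) - φ a • gA a) = 0 := by
    ext v
    calc (φ + ∑ a : S, (dualRight (a : A) (gA a) - φ a • gA a)) v
        = ∑ a : S, gA a ((T v).1 a) + (T v).2 := by simp [T, add_comm]
      _ = g (T v) := by
        rw [← g.comp_inl_add_comp_inr, ← ContinuousLinearMap.sum_comp_single, hinr]; rfl
      _ = 0 := hgT _ ⟨v, rfl⟩
  have hmem : -∑ a : S, (dualRight (a : A) (gA a) - φ a • gA a) ∈ leftPhiDefects φ :=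
    Submodule.neg_mem _ <| Submodule.sum_mem _ fun a _ =>
      Submodule.subset_span ⟨((a : A), gA a), rfl⟩
  exact hφ (by rwa [← eq_neg_of_add_eq_zero_left hdecomp] at hmem)

theorem approximatelyLeftPhiAmenable_of_forall_exists {φ : A →L[ℂ] ℂ}
    (h : ∀ (S : Finset A) (ε : ℝ), 0 < ε →
      ∃ v : A, (∀ a ∈ S, ‖a * v - φ a • v‖ < ε) ∧ ‖φ v - 1‖ < ε) :
    ApproximatelyLeftPhiAmenable φ := by
  classical
  choose v hv using fun p : Finset A × ℕ => h p.1 _ (Nat.one_div_pos_of_nat (n := p.2))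
  have hε : Tendsto (fun p : Finset A × ℕ => 1 / ((p.2 : ℝ) + 1)) atTop (𝓝 0) :=
    tendsto_one_div_add_atTop_nhds_zero_nat.comp (tendsto_snd.mono_left prod_atTop_atTop_eq.ge)
  refine ⟨atTop.map v, map_neBot, fun a => ?_, ?_⟩
  · refine tendsto_map'_iff.2 (squeeze_zero_norm' ?_ hε)
    filter_upwards [eventually_ge_atTop ({a}, 0)] with p hp
    exact ((hv p).1 a (hp.1 (Finset.mem_singleton_self a))).le
  · refine tendsto_map'_iff.2 (tendsto_iff_norm_sub_tendsto_zero.2 (squeeze_zero_norm' ?_ hε))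
    exact Eventually.of_forall fun p => by simpa using (hv p).2.le

local notation "κ" => NormedSpace.inclusionInDoubleDual ℂ _

lemma inclusionInDoubleDual_mul (x y : A) : κ (x * y) = κ x * κ y := rfl

/-- `dualTensor g h` is the elementary tensor `g ⊗ h ∈ A* ⊗ A* ⊆ (A** ⊗_p A**)*`. -/
def dualTensor : Dual' A →L[ℂ] Dual' A →L[ℂ] BilForm (Bidual A) :=
  (smulRightL ℂ (Bidual A) (Dual' (Bidual A))).bilinearComp κ κ

@[simp] lemma dualTensor_apply (g h : Dual' A) (F G : Bidual A) :
    dualTensor g h F G = F g * G h := by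
  simp [dualTensor]

lemma bilRight_inclusionInDoubleDual_dualTensor (a : A) (g h : Dual' A) :
    bilRight (κ a) (dualTensor g h) = dualTensor (dualRight a g) h := rfl

section Character

variable {φ : A →L[ℂ] ℂ} (hm : ∀ a b : A, φ (a * b) = φ a * φ b)
include hm

lemma piStar_apply_of_mul (a : A) : piStar φ a = φ a • φ := by
  ext b; simp [hm]

lemma dualRight_of_mul (a : A) : dualRight a φ = φ a • φ := piStar_apply_of_mul hm a

lemma arens_mul_apply_of_mul (F G : Bidual A) : (F * G) φ = F φ * G φ := by
  have : arensAux G φ = G φ • φ := by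
    ext a
    simp [piStar_apply_of_mul hm, mul_comm]
  rw [arens_mul_apply, this, map_smul, smul_eq_mul, mul_comm]

lemma piStar_inclusionInDoubleDual_of_mul : piStar (κ φ) = dualTensor φ φ := by
  ext F G
  simp [arens_mul_apply_of_mul hm]

lemma bilLeft_dualTensor_of_mul (b : Bidual A) (g : Dual' A) :
    bilLeft b (dualTensor g φ) = b φ • dualTensor g φ := by
  ext F G
  simp only [bilLeft_apply, dualTensor_apply, arens_mul_apply_of_mul hm, smul_apply, smul_eq_mul]
  ring

end Character

namespace IsBimodMorphism

variable {ρ : BilForm (Bidual A) →L[ℂ] Dual' (Bidual A)} (hρ : IsBimodMorphism ρ)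
include hρ

lemma apply_inclusionInDoubleDual_mul (a : A) (g h : Dual' A) (F : Bidual A) :
    ρ (dualTensor g h) (κ a * F) = ρ (dualTensor (dualRight a g) h) F := by
  rw [← bilRight_inclusionInDoubleDual_dualTensor, (hρ (κ a) _).2, dualRight_apply]

variable {φ : A →L[ℂ] ℂ} (hm : ∀ a b : A, φ (a * b) = φ a * φ b)
include hm

lemma apply_mul_inclusionInDoubleDual (a : A) (g : Dual' A) (F : Bidual A) :
    ρ (dualTensor g φ) (F * κ a) = φ a * ρ (dualTensor g φ) F := by
  rw [← dualLeft_apply, ← (hρ (κ a) _).1, bilLeft_dualTensor_of_mul hm, map_smul]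
  rfl

lemma tendsto_dualTensor_of_mem_leftPhiDefects {l : Filter A}
    (hl : ∀ a : A, Tendsto (fun u => a * u - u * a) l (𝓝 0)) {f : Dual' A}
    (hf : f ∈ leftPhiDefects φ) :
    Tendsto (fun w => ρ (dualTensor f φ) (κ w)) l (𝓝 0) := by
  induction hf using Submodule.span_induction with
  | mem f hf =>
    obtain ⟨⟨a, g⟩, rfl⟩ := hf
    have hcomm : ∀ w, ρ (dualTensor (dualRight a g - φ a • g) φ) (κ w)
        = (ρ (dualTensor g φ)).comp κ (a * w - w * a) := by
      intro w
      simp only [map_sub, map_smul, sub_apply, smul_apply, smul_eq_mul, comp_apply]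
      rw [inclusionInDoubleDual_mul, inclusionInDoubleDual_mul,
        hρ.apply_inclusionInDoubleDual_mul, hρ.apply_mul_inclusionInDoubleDual hm]
    exact ((((ρ (dualTensor g φ)).comp κ).continuous.tendsto' 0 0 (map_zero _)).comp
      (hl a)).congr fun w => (hcomm w).symm
  | zero => simpa using tendsto_const_nhds
  | add f f' _ _ hf hf' => simpa using hf.add hf'
  | smul c f _ hf => simpa using hf.const_mul c

lemma apply_piStar_inclusionInDoubleDual_eq_zero (hinner : ApproximatelyPhiInnerAmenable φ)
    (hφ : φ ∈ leftPhiDefects φ) (v : A) : ρ (piStar (κ φ)) (κ v) = 0 := by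
  obtain ⟨l, hl, hcomm, hφ1⟩ := hinner
  rw [piStar_inclusionInDoubleDual_of_mul hm]
  have hsymm : ∀ w, φ w * ρ (dualTensor φ φ) (κ v) = φ v * ρ (dualTensor φ φ) (κ w) := by
    intro w
    calc φ w * ρ (dualTensor φ φ) (κ v) = ρ (dualTensor φ φ) (κ v * κ w) :=
          (hρ.apply_mul_inclusionInDoubleDual hm w φ (κ v)).symm
      _ = ρ (dualTensor (dualRight v φ) φ) (κ w) := hρ.apply_inclusionInDoubleDual_mul v φ φ _
      _ = φ v * ρ (dualTensor φ φ) (κ w) := by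
          rw [dualRight_of_mul hm, map_smul, smul_apply, map_smul, smul_apply, smul_eq_mul]
  have h0 := (hρ.tendsto_dualTensor_of_mem_leftPhiDefects hm hcomm hφ).const_mul (φ v)
  rw [mul_zero] at h0
  simpa using tendsto_nhds_unique (hφ1.mul_const _) (h0.congr fun w => (hsymm w).symm)

end IsBimodMorphism

end

theorem statement2_general (A : Type*) [NonUnitalNormedRing A] [NormedSpace ℂ A]
    [IsScalarTower ℂ A A] [SMulCommClass ℂ A A]
    (φ : A →L[ℂ] ℂ) (hφ : IsCharacter φ)
    (hinner : ApproximatelyPhiInnerAmenable φ)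
    (hbiflat : ApproximatelyBiflat (Bidual A)) :
    ApproximatelyLeftPhiAmenable φ := by
  obtain ⟨hφ0, hm⟩ := hφ
  refine approximatelyLeftPhiAmenable_of_forall_exists fun S _ hε =>
    exists_norm_mul_sub_smul_lt_of_notMem_leftPhiDefects (fun hmem => hφ0 ?_) S hε
  obtain ⟨l, hl, hbimod, hconv⟩ := hbiflat
  ext v
  exact tendsto_nhds_unique (hconv _ _) <| tendsto_const_nhds.congr' <| hbimod.mono fun ρ hρ =>
    (hρ.apply_piStar_inclusionInDoubleDual_eq_zero hm hinner hmem v).symm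

/-- Let `A` be a Banach algebra, `φ` a character on `A`, and suppose `A` is
approximately `φ`-inner amenable.  If the second dual `A**` (with the first Arens product) is
approximately biflat, then `A` is approximately left `φ`-amenable. -/
theorem statement2 (A : Type*) [NonUnitalNormedRing A] [NormedSpace ℂ A]
    [IsScalarTower ℂ A A] [SMulCommClass ℂ A A] [CompleteSpace A]
    (φ : A →L[ℂ] ℂ) (hφ : IsCharacter φ)
    (hinner : ApproximatelyPhiInnerAmenable φ)
    (hbiflat : ApproximatelyBiflat (Bidual A)) :
    ApproximatelyLeftPhiAmenable φ :=
  statement2_general A φ hφ hinner hbiflat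

end ApproxBiflat
end
end

section
/- Let A be a Banach algebra, φ a character on A, and suppose A is approximately φ-inner amenable. If A is approximately biflat, then A is approximately left φ-amenable. -/
set_option synthInstance.maxHeartbeats 1000000
set_option maxHeartbeats 4000000
set_option maxSynthPendingDepth 3
set_option linter.unusedSectionVars false
set_option linter.unusedVariables false
open scoped Topology
open Filter ContinuousLinearMap

noncomputable section

/-!
If some finite set `F ⊆ A` and tolerance `ε > 0` admitted no `u` with `φ u = 1` and
`‖a u - φ(a) u‖ ≤ ε` for `a ∈ F`, then `φ` would be bounded below by the map
`u ↦ (a u - φ(a) u)_{a ∈ F}`, and Hahn–Banach would write `φ = ∑_{a ∈ F} (f_a · a - φ(a) f_a)`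
for some `f_a ∈ A*`. For a bimodule morphism `ρ`, pairing with `f ⊗ φ` turns this into
`ρ(π* φ)(v) = ∑_a ρ(f_a ⊗ φ)(a v - v a)`. As `ρ(π* φ)` is a multiple of `φ`, letting `v` run
through a net witnessing approximate `φ`-inner amenability forces `ρ(π* φ) = 0` for every
bimodule morphism `ρ`, contradicting `ρ_α(π* φ) → φ` along a net witnessing approximate
biflatness.
-/

section HahnBanach

variable {𝕜 E G : Type*} [RCLike 𝕜] [SeminormedAddCommGroup E] [NormedSpace 𝕜 E]
  [SeminormedAddCommGroup G] [NormedSpace 𝕜 G]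

theorem exists_dual_eq_one_of_notMem_closure (V : Submodule 𝕜 E) {x : E}
    (hx : x ∉ closure (V : Set E)) :
    ∃ f : StrongDual 𝕜 E, f x = 1 ∧ ∀ w ∈ V, f w = 0 := by
  have hx' : ‖V.mkQ x‖ ≠ 0 := mt (QuotientAddGroup.norm_mk_eq_zero_iff_mem_closure).1 hx
  obtain ⟨g, -, hg⟩ := exists_dual_vector 𝕜 (V.mkQ x) hx'
  refine ⟨(‖V.mkQ x‖ : 𝕜)⁻¹ • g.comp V.mkQL, ?_, fun w hw => ?_⟩
  · rw [smul_apply, comp_apply, Submodule.mkQL_apply, hg, smul_eq_mul]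
    exact inv_mul_cancel₀ (RCLike.ofReal_ne_zero.2 hx')
  · simp [(Submodule.Quotient.mk_eq_zero V).2 hw]

theorem StrongDual.exists_eq_one {φ : StrongDual 𝕜 E} (hφ : φ ≠ 0) : ∃ b, φ b = 1 := by
  obtain ⟨x, hx⟩ := DFunLike.ne_iff.1 hφ
  exact ⟨(φ x)⁻¹ • x, by rw [map_smul, smul_eq_mul, inv_mul_cancel₀ hx]⟩

theorem exists_dual_comp_eq_of_le_norm (T : E →L[𝕜] G) (φ : StrongDual 𝕜 E) {ε : ℝ}
    (hε : 0 < ε) (hT : ∀ u, φ u = 1 → ε ≤ ‖T u‖) :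
    ∃ ψ : StrongDual 𝕜 G, ψ.comp T = φ := by
  by_cases hφ : φ = 0
  · exact ⟨0, by rw [hφ, zero_comp]⟩
  obtain ⟨b, hb⟩ := StrongDual.exists_eq_one hφ
  let V := (LinearMap.ker (φ : E →ₗ[𝕜] 𝕜)).map (T : E →ₗ[𝕜] G)
  have hsep : T b ∉ closure (V : Set G) := by
    intro hmem
    obtain ⟨_, ⟨z, hz, rfl⟩, hdist⟩ := Metric.mem_closure_iff.1 hmem ε hε
    have hφz : φ z = 0 := LinearMap.mem_ker.1 hz
    have hTbz := hT (b - z) (by rw [map_sub, hb, hφz, sub_zero])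
    rw [map_sub, ← dist_eq_norm] at hTbz
    exact hdist.not_ge hTbz
  obtain ⟨ψ, hψb, hψV⟩ := exists_dual_eq_one_of_notMem_closure V hsep
  refine ⟨ψ, ext fun u => ?_⟩
  have hker : ψ (T (u - φ u • b)) = 0 :=
    hψV _ ⟨_, LinearMap.mem_ker.2 (by simp [hb]), rfl⟩
  rw [map_sub, map_sub, map_smul, map_smul, hψb, smul_eq_mul, mul_one, sub_eq_zero] at hker
  exact hker

end HahnBanach

namespace ApproxBiflat

section BanachAlgebra

variable {A : Type*} [NonUnitalNormedRing A] [NormedSpace ℂ A]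

/-- `f ↦ f ⊗ φ`, from `A*` to `(A ⊗_p A)*`. -/
def tensorRight (φ : Dual' A) : Dual' A →L[ℂ] BilForm A :=
  (smulRightL ℂ A (Dual' A)).flip φ

@[simp] lemma tensorRight_apply (φ f : Dual' A) (b c : A) :
    tensorRight φ f b c = f b * φ c := rfl

variable [IsScalarTower ℂ A A] [SMulCommClass ℂ A A]

lemma bilRight_tensorRight (φ f : Dual' A) (a : A) :
    bilRight a (tensorRight φ f) = tensorRight φ (dualRight a f) := rfl

variable {φ : A →L[ℂ] ℂ}

lemma bilLeft_tensorRight (hφ : ∀ a b, φ (a * b) = φ a * φ b) (f : Dual' A) (a : A) :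
    bilLeft a (tensorRight φ f) = φ a • tensorRight φ f := by
  ext b c
  simp only [bilLeft_apply, tensorRight_apply, smul_apply, smul_eq_mul, hφ]
  ring

lemma piStar_eq_tensorRight (hφ : ∀ a b, φ (a * b) = φ a * φ b) :
    piStar φ = tensorRight φ φ := by
  ext b c
  exact hφ b c

lemma bilLeft_piStar (hφ : ∀ a b, φ (a * b) = φ a * φ b) (a : A) :
    bilLeft a (piStar φ) = φ a • piStar φ := by
  rw [piStar_eq_tensorRight hφ, bilLeft_tensorRight hφ]

lemma bilRight_piStar (hφ : ∀ a b, φ (a * b) = φ a * φ b) (a : A) :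
    bilRight a (piStar φ) = φ a • piStar φ := by
  ext b c
  simp only [bilRight_apply, piStar_apply, smul_apply, smul_eq_mul, hφ]
  ring

lemma IsBimodMorphism.apply_piStar_eq_smul {ρ : BilForm A →L[ℂ] Dual' A}
    (hρ : IsBimodMorphism ρ) (hφ : ∀ a b, φ (a * b) = φ a * φ b) {b : A} (hb : φ b = 1) :
    ρ (piStar φ) = ρ (piStar φ) b • φ := by
  ext x
  calc ρ (piStar φ) x = ρ (piStar φ) (x * b) := by
        rw [← dualLeft_apply, ← (hρ b _).1, bilLeft_piStar hφ, hb, one_smul]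
    _ = φ x * ρ (piStar φ) b := by
        rw [← dualRight_apply, ← (hρ x _).2, bilRight_piStar hφ, map_smul, smul_apply,
          smul_eq_mul]
    _ = (ρ (piStar φ) b • φ) x := by rw [smul_apply, smul_eq_mul, mul_comm]

lemma IsBimodMorphism.apply_tensorRight_dualRight_sub {ρ : BilForm A →L[ℂ] Dual' A}
    (hρ : IsBimodMorphism ρ) (hφ : ∀ a b, φ (a * b) = φ a * φ b) (f : Dual' A) (a v : A) :
    ρ (tensorRight φ (dualRight a f - φ a • f)) v = ρ (tensorRight φ f) (a * v - v * a) := by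
  rw [map_sub, map_smul, ← bilRight_tensorRight, ← bilLeft_tensorRight hφ, map_sub,
    (hρ a _).1, (hρ a _).2, sub_apply, dualRight_apply, dualLeft_apply, map_sub]

theorem IsBimodMorphism.apply_piStar_eq_zero {ρ : BilForm A →L[ℂ] Dual' A}
    (hρ : IsBimodMorphism ρ) (hφ : IsCharacter φ) (hinner : ApproximatelyPhiInnerAmenable φ)
    {ι : Type*} [Fintype ι] (a : ι → A) (f : ι → Dual' A)
    (hf : ∑ i, (dualRight (a i) (f i) - φ (a i) • f i) = φ) :
    ρ (piStar φ) = 0 := by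
  obtain ⟨l, hl, hcomm, hone⟩ := hinner
  obtain ⟨b, hb⟩ := StrongDual.exists_eq_one hφ.1
  set c := ρ (piStar φ) b
  have hsmul : ρ (piStar φ) = c • φ := hρ.apply_piStar_eq_smul hφ.2 hb
  have hsum : ∀ v, c * φ v = ∑ i, ρ (tensorRight φ (f i)) (a i * v - v * a i) := by
    intro v
    calc c * φ v = ρ (tensorRight φ (∑ i, (dualRight (a i) (f i) - φ (a i) • f i))) v := by
          rw [hf, ← piStar_eq_tensorRight hφ.2, hsmul, smul_apply, smul_eq_mul]
      _ = _ := by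
          simp only [map_sum, sum_apply, hρ.apply_tensorRight_dualRight_sub hφ.2]
  have hzero : Tendsto (fun v => c * φ v) l (𝓝 0) := by
    simp only [hsum]
    simpa using tendsto_finsetSum Finset.univ fun i _ =>
      ((ρ (tensorRight φ (f i))).continuous.tendsto 0).comp (hcomm (a i))
  have hc : c = 0 := tendsto_nhds_unique (by simpa using hone.const_mul c) hzero
  rw [hsmul, hc, zero_smul]

theorem ApproximatelyBiflat.exists_apply_piStar_ne_zero (hA : ApproximatelyBiflat A)
    (hφ : φ ≠ 0) : ∃ ρ : BilForm A →L[ℂ] Dual' A, IsBimodMorphism ρ ∧ ρ (piStar φ) ≠ 0 := by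
  obtain ⟨x, hx⟩ := DFunLike.ne_iff.1 hφ
  obtain ⟨l, hl, hbim, hconv⟩ := hA
  obtain ⟨ρ, hρ, hρx⟩ := (hbim.and ((hconv φ x).eventually_ne hx)).exists
  exact ⟨ρ, hρ, fun h => hρx (by rw [h])⟩

end BanachAlgebra

section LeftPhiAmenable

variable {A : Type*} [NonUnitalNormedRing A] [NormedSpace ℂ A] {φ : A →L[ℂ] ℂ}

theorem approximatelyLeftPhiAmenable_of_forall_finset
    (h : ∀ (F : Finset A) (ε : ℝ), 0 < ε → ∃ u, φ u = 1 ∧ ∀ a ∈ F, ‖a * u - φ a • u‖ ≤ ε) :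
    ApproximatelyLeftPhiAmenable φ := by
  classical
  choose u hu_one hu_le using fun p : Finset A × ℕ => h p.1 (1 / (p.2 + 1)) (by positivity)
  refine ⟨map u atTop, inferInstance, fun a => ?_, ?_⟩
  · have hsnd : Tendsto (fun p : Finset A × ℕ => (1 : ℝ) / (p.2 + 1)) atTop (𝓝 0) :=
      tendsto_one_div_add_atTop_nhds_zero_nat.comp
        (tendsto_atTop_atTop.2 fun n => ⟨(∅, n), fun p hp => hp.2⟩)
    refine tendsto_map'_iff.2 (squeeze_zero_norm' ?_ hsnd)
    filter_upwards [eventually_ge_atTop ({a}, 0)] with p hp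
    exact hu_le p a (hp.1 (Finset.mem_singleton_self a))
  · simp only [tendsto_map'_iff, Function.comp_def, hu_one, tendsto_const_nhds]

variable [IsScalarTower ℂ A A] [SMulCommClass ℂ A A]

theorem exists_apply_eq_one_forall_norm_mul_sub_smul_le (hφ : IsCharacter φ)
    (hinner : ApproximatelyPhiInnerAmenable φ) (hbiflat : ApproximatelyBiflat A)
    (F : Finset A) {ε : ℝ} (hε : 0 < ε) :
    ∃ u, φ u = 1 ∧ ∀ a ∈ F, ‖a * u - φ a • u‖ ≤ ε := by
  classical
  by_contra! hfar
  let T : A →L[ℂ] (F → A) := pi fun a => mul ℂ A a - φ a • ContinuousLinearMap.id ℂ A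
  have hT_apply : ∀ u (a : F), T u a = a * u - φ a • u := fun _ _ => rfl
  have hT : ∀ u, φ u = 1 → ε ≤ ‖T u‖ := fun u hu => by
    obtain ⟨a, ha, hlt⟩ := hfar u hu
    rw [← hT_apply u ⟨a, ha⟩] at hlt
    exact hlt.le.trans (norm_le_pi_norm (T u) ⟨a, ha⟩)
  obtain ⟨ψ, hψ⟩ := exists_dual_comp_eq_of_le_norm T φ hε hT
  let f : F → Dual' A := fun a => ψ.comp (single ℂ (fun _ => A) a)
  have hf : ∑ a : F, (dualRight (a : A) (f a) - φ a • f a) = φ := by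
    ext u
    have hψu := sum_comp_single ℂ (fun _ => A) ψ (T u)
    rw [← comp_apply, hψ] at hψu
    rw [← hψu, sum_apply]
    refine Finset.sum_congr rfl fun a _ => ?_
    rw [hT_apply, map_sub, map_smul]
    rfl
  obtain ⟨ρ, hρ, hne⟩ := hbiflat.exists_apply_piStar_ne_zero hφ.1
  exact hne (hρ.apply_piStar_eq_zero hφ hinner _ f hf)

end LeftPhiAmenable

theorem statement3_general (A : Type*) [NonUnitalNormedRing A] [NormedSpace ℂ A]
    [IsScalarTower ℂ A A] [SMulCommClass ℂ A A]
    (φ : A →L[ℂ] ℂ) (hφ : IsCharacter φ)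
    (hinner : ApproximatelyPhiInnerAmenable φ)
    (hbiflat : ApproximatelyBiflat A) :
    ApproximatelyLeftPhiAmenable φ :=
  approximatelyLeftPhiAmenable_of_forall_finset fun F _ hε =>
    exists_apply_eq_one_forall_norm_mul_sub_smul_le hφ hinner hbiflat F hε

/-- Let `A` be a Banach algebra, `φ` a character on `A`, and suppose `A` is
approximately `φ`-inner amenable.  If `A` is approximately biflat, then `A` is approximately
left `φ`-amenable. -/
theorem statement3 (A : Type*) [NonUnitalNormedRing A] [NormedSpace ℂ A]
    [IsScalarTower ℂ A A] [SMulCommClass ℂ A A] [CompleteSpace A]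
    (φ : A →L[ℂ] ℂ) (hφ : IsCharacter φ)
    (hinner : ApproximatelyPhiInnerAmenable φ)
    (hbiflat : ApproximatelyBiflat A) :
    ApproximatelyLeftPhiAmenable φ :=
  statement3_general A φ hφ hinner hbiflat

end ApproxBiflat
end
end

section
/- Let T = Tri(A,X,B) be a Triangular Banach algebra with closure(A²) = A and closure(A·X) = X, and let φ ∈ Δ(B) satisfy closure(B·ker φ) = ker φ. If either (i) B is not left φ-amenable, or (ii) X admits a right φ-character, then T** (with an Arens product) is not approximately biflat. -/
/-!
Write `T = Tri(A, X, B)`, `ψ = φ ∘ proj_B` (a character of `T`) and `ψ̃` for its canonical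
extension, a character of `T**` for the first Arens product. For `f ∈ T*` the functional
`f ⊗ ψ̃` on `T** ⊗ T**` satisfies `R · (f ⊗ ψ̃) = ψ̃(R) (f ⊗ ψ̃)`, and `π*(ψ̃) = ψ̃ ⊗ ψ̃`.
Hence a bimodule morphism `ρ` sends `f ⊗ ψ̃` to a functional `g` with `g(W R) = g(W) ψ̃(R)`,
which vanishes on `A X` and on `B ker φ`, hence (by the density hypotheses) on `X` and on
`ker φ`.

If `ρ_α ∘ π* → id`, then `ρ_α(π* ψ̃)(b₀) → φ(b₀) = 1`. In case (ii), if `η(x₀) ≠ 0` then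
`(η ∘ proj_X) · x₀ = η(x₀) ψ`, so `η(x₀) ρ(π* ψ̃)(t) = ρ((η ∘ proj_X) ⊗ ψ̃)(x₀ t) = 0`
for every `ρ` and `t`. In case (i), any `ρ` with `c = ρ(π* ψ̃)(b₀) ≠ 0` yields the left
`φ`-mean `h ↦ c⁻¹ ρ((h ∘ proj_B) ⊗ ψ̃)(b₀)` on `B*`.
-/

set_option synthInstance.maxHeartbeats 1000000
set_option maxHeartbeats 4000000
set_option maxSynthPendingDepth 3
set_option linter.unusedSectionVars false
set_option linter.unusedVariables false
open scoped Topology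
open Filter ContinuousLinearMap

noncomputable section

namespace ApproxBiflat

/-- A Banach `A, B`-module `X`: a Banach space with a contractive left `A`-action and a
contractive right `B`-action that commute. -/
class BanachBimodule (A B X : Type*)
    [NonUnitalNormedRing A] [NormedSpace ℂ A]
    [NonUnitalNormedRing B] [NormedSpace ℂ B]
    [NormedAddCommGroup X] [NormedSpace ℂ X] where
  lsmul : A →L[ℂ] X →L[ℂ] X
  rsmul : B →L[ℂ] X →L[ℂ] X
  lsmul_mul : ∀ (a a' : A) (x : X), lsmul (a * a') x = lsmul a (lsmul a' x)
  rsmul_mul : ∀ (b b' : B) (x : X), rsmul (b * b') x = rsmul b' (rsmul b x)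
  lsmul_rsmul : ∀ (a : A) (b : B) (x : X), lsmul a (rsmul b x) = rsmul b (lsmul a x)
  norm_lsmul_le : ∀ (a : A) (x : X), ‖lsmul a x‖ ≤ ‖a‖ * ‖x‖
  norm_rsmul_le : ∀ (b : B) (x : X), ‖rsmul b x‖ ≤ ‖b‖ * ‖x‖

section BimodAbbrev

variable (A B X : Type*)
  [NonUnitalNormedRing A] [NormedSpace ℂ A]
  [NonUnitalNormedRing B] [NormedSpace ℂ B]
  [NormedAddCommGroup X] [NormedSpace ℂ X] [BanachBimodule A B X]

/-- The left action of `A` on the Banach `A,B`-module `X`. -/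
noncomputable def lAct : A →L[ℂ] X →L[ℂ] X := BanachBimodule.lsmul B

/-- The right action of `B` on the Banach `A,B`-module `X`. -/
noncomputable def rAct : B →L[ℂ] X →L[ℂ] X := BanachBimodule.rsmul A

end BimodAbbrev

/-- The triangular Banach algebra `Tri(A, X, B)` of matrices `[[a, x], [0, b]]`,
with norm `‖a‖ + ‖x‖ + ‖b‖`. -/
@[ext]
structure Tri (A X B : Type*) where
  a : A
  x : X
  b : B

namespace Tri

variable {A B X : Type*}
  [NonUnitalNormedRing A] [NormedSpace ℂ A] [IsScalarTower ℂ A A] [SMulCommClass ℂ A A]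
  [NonUnitalNormedRing B] [NormedSpace ℂ B] [IsScalarTower ℂ B B] [SMulCommClass ℂ B B]
  [NormedAddCommGroup X] [NormedSpace ℂ X]

instance : Add (Tri A X B) := ⟨fun s t => ⟨s.a + t.a, s.x + t.x, s.b + t.b⟩⟩
instance : Zero (Tri A X B) := ⟨⟨0, 0, 0⟩⟩
instance : Neg (Tri A X B) := ⟨fun t => ⟨-t.a, -t.x, -t.b⟩⟩
instance : SMul ℂ (Tri A X B) := ⟨fun c t => ⟨c • t.a, c • t.x, c • t.b⟩⟩

@[simp] lemma add_a (s t : Tri A X B) : (s + t).a = s.a + t.a := rfl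
@[simp] lemma add_x (s t : Tri A X B) : (s + t).x = s.x + t.x := rfl
@[simp] lemma add_b (s t : Tri A X B) : (s + t).b = s.b + t.b := rfl
@[simp] lemma zero_a : (0 : Tri A X B).a = 0 := rfl
@[simp] lemma zero_x : (0 : Tri A X B).x = 0 := rfl
@[simp] lemma zero_b : (0 : Tri A X B).b = 0 := rfl
@[simp] lemma neg_a (t : Tri A X B) : (-t).a = -t.a := rfl
@[simp] lemma neg_x (t : Tri A X B) : (-t).x = -t.x := rfl
@[simp] lemma neg_b (t : Tri A X B) : (-t).b = -t.b := rfl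
@[simp] lemma smul_a (c : ℂ) (t : Tri A X B) : (c • t).a = c • t.a := rfl
@[simp] lemma smul_x (c : ℂ) (t : Tri A X B) : (c • t).x = c • t.x := rfl
@[simp] lemma smul_b (c : ℂ) (t : Tri A X B) : (c • t).b = c • t.b := rfl

instance : AddCommGroup (Tri A X B) where
  add_assoc s t u := by ext <;> simp [add_assoc]
  zero_add t := by ext <;> simp
  add_zero t := by ext <;> simp
  neg_add_cancel t := by ext <;> simp
  add_comm s t := by ext <;> simp [add_comm]
  nsmul := nsmulRec
  zsmul := zsmulRec

instance : Module ℂ (Tri A X B) where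
  one_smul t := by ext <;> simp
  mul_smul c d t := by ext <;> simp [mul_smul]
  smul_zero c := by ext <;> simp
  smul_add c s t := by ext <;> simp
  add_smul c d t := by ext <;> simp [add_smul]
  zero_smul t := by ext <;> simp

noncomputable instance : NormedAddCommGroup (Tri A X B) :=
  AddGroupNorm.toNormedAddCommGroup
    { toFun := fun t => ‖t.a‖ + ‖t.x‖ + ‖t.b‖
      map_zero' := by simp
      add_le' := fun s t => by
        have h1 := norm_add_le s.a t.a
        have h2 := norm_add_le s.x t.x
        have h3 := norm_add_le s.b t.b
        simp only [add_a, add_x, add_b]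
        linarith
      neg' := fun t => by simp
      eq_zero_of_map_eq_zero' := fun t h => by
        have h' : ‖t.a‖ + ‖t.x‖ + ‖t.b‖ = 0 := h
        have h1 : ‖t.a‖ = 0 := by
          nlinarith [norm_nonneg t.a, norm_nonneg t.x, norm_nonneg t.b]
        have h2 : ‖t.x‖ = 0 := by
          nlinarith [norm_nonneg t.a, norm_nonneg t.x, norm_nonneg t.b]
        have h3 : ‖t.b‖ = 0 := by
          nlinarith [norm_nonneg t.a, norm_nonneg t.x, norm_nonneg t.b]
        ext
        · exact norm_eq_zero.1 h1
        · exact norm_eq_zero.1 h2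
        · exact norm_eq_zero.1 h3 }

lemma norm_def (t : Tri A X B) : ‖t‖ = ‖t.a‖ + ‖t.x‖ + ‖t.b‖ := rfl

noncomputable instance : NormedSpace ℂ (Tri A X B) where
  norm_smul_le c t := by
    rw [norm_def, norm_def]
    simp only [smul_a, smul_x, smul_b, norm_smul]
    exact le_of_eq (by ring)

section Mul

variable [BanachBimodule A B X]

instance : Mul (Tri A X B) :=
  ⟨fun s t => ⟨s.a * t.a, lAct A B X s.a t.x + rAct A B X t.b s.x, s.b * t.b⟩⟩

@[simp] lemma mul_a (s t : Tri A X B) : (s * t).a = s.a * t.a := rfl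
@[simp] lemma mul_x (s t : Tri A X B) :
    (s * t).x = lAct A B X s.a t.x + rAct A B X t.b s.x := rfl
@[simp] lemma mul_b (s t : Tri A X B) : (s * t).b = s.b * t.b := rfl

private lemma lAct_mul (a a' : A) (x : X) :
    lAct A B X (a * a') x = lAct A B X a (lAct A B X a' x) :=
  BanachBimodule.lsmul_mul (A := A) (B := B) (X := X) a a' x
private lemma rAct_mul (b b' : B) (x : X) :
    rAct A B X (b * b') x = rAct A B X b' (rAct A B X b x) :=
  BanachBimodule.rsmul_mul (A := A) (B := B) (X := X) b b' x
private lemma lAct_rAct (a : A) (b : B) (x : X) :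
    lAct A B X a (rAct A B X b x) = rAct A B X b (lAct A B X a x) :=
  BanachBimodule.lsmul_rsmul (A := A) (B := B) (X := X) a b x

instance : NonUnitalRing (Tri A X B) where
  left_distrib s t u := by
    ext <;> simp [mul_add, map_add] <;> try abel
  right_distrib s t u := by
    ext <;> simp [add_mul, map_add, ContinuousLinearMap.add_apply] <;> try abel
  zero_mul t := by ext <;> simp
  mul_zero t := by ext <;> simp
  mul_assoc s t u := by
    ext
    · simp [mul_assoc]
    · simp only [mul_x, mul_a, mul_b, map_add, ContinuousLinearMap.add_apply,
        lAct_mul, rAct_mul, lAct_rAct]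
      abel
    · simp [mul_assoc]

noncomputable instance : NonUnitalNormedRing (Tri A X B) :=
  { (inferInstance : NormedAddCommGroup (Tri A X B)),
    (inferInstance : NonUnitalRing (Tri A X B)) with
    norm_mul_le := fun s t => by
      rw [norm_def, norm_def, norm_def]
      simp only [mul_a, mul_x, mul_b]
      have h1 := norm_mul_le s.a t.a
      have h2 := norm_mul_le s.b t.b
      have h3 := norm_add_le (lAct A B X s.a t.x) (rAct A B X t.b s.x)
      have h4 : ‖lAct A B X s.a t.x‖ ≤ ‖s.a‖ * ‖t.x‖ :=
        BanachBimodule.norm_lsmul_le (A := A) (B := B) (X := X) s.a t.x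
      have h5 : ‖rAct A B X t.b s.x‖ ≤ ‖t.b‖ * ‖s.x‖ :=
        BanachBimodule.norm_rsmul_le (A := A) (B := B) (X := X) t.b s.x
      have n1 := norm_nonneg s.a; have n2 := norm_nonneg s.x; have n3 := norm_nonneg s.b
      have n4 := norm_nonneg t.a; have n5 := norm_nonneg t.x; have n6 := norm_nonneg t.b
      nlinarith }

instance : IsScalarTower ℂ (Tri A X B) (Tri A X B) :=
  ⟨fun c s t => by
    show (c • s) * t = c • (s * t)
    ext
    · simp [smul_mul_assoc]
    · simp [map_smul, smul_add]
    · simp [smul_mul_assoc]⟩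

instance : SMulCommClass ℂ (Tri A X B) (Tri A X B) :=
  ⟨fun c s t => by
    show c • (s * t) = s * (c • t)
    ext
    · simp [mul_smul_comm]
    · simp [map_smul, smul_add]
    · simp [mul_smul_comm]⟩

end Mul

/-- The projection `Tri(A,X,B) → B` as a continuous linear map. -/
noncomputable def projB : Tri A X B →L[ℂ] B :=
  LinearMap.mkContinuous
    { toFun := fun t => t.b
      map_add' := fun _ _ => rfl
      map_smul' := fun _ _ => rfl } 1
    (fun t => by
      show ‖t.b‖ ≤ 1 * ‖t‖
      rw [one_mul, norm_def]
      have := norm_nonneg t.a; have := norm_nonneg t.x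
      linarith)

@[simp] lemma projB_apply (t : Tri A X B) : projB t = t.b := rfl

end Tri

/-- The character `ψ_φ` on `Tri(A,X,B)` induced by a character `φ` on `B`:
`ψ_φ [[a,x],[0,b]] = φ b`. -/
noncomputable def triCharacter {A B X : Type*}
    [NonUnitalNormedRing A] [NormedSpace ℂ A] [IsScalarTower ℂ A A] [SMulCommClass ℂ A A]
    [NonUnitalNormedRing B] [NormedSpace ℂ B] [IsScalarTower ℂ B B] [SMulCommClass ℂ B B]
    [NormedAddCommGroup X] [NormedSpace ℂ X]
    (φ : B →L[ℂ] ℂ) : Tri A X B →L[ℂ] ℂ :=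
  φ.comp Tri.projB

end ApproxBiflat

theorem ContinuousLinearMap.map_eq_zero_of_mem_closure_span {R M N : Type*}
    [Semiring R] [TopologicalSpace M] [AddCommMonoid M] [Module R M] [ContinuousAdd M]
    [ContinuousConstSMul R M] [TopologicalSpace N] [T1Space N] [AddCommMonoid N] [Module R N]
    (g : M →L[R] N) {s : Set M} (hs : ∀ y ∈ s, g y = 0) {x : M}
    (hx : x ∈ (Submodule.span R s).topologicalClosure) : g x = 0 :=
  Submodule.topologicalClosure_minimal _ (Submodule.span_le.2 fun y hy => hs y hy)
    g.isClosed_ker hx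

namespace ApproxBiflat

local notation "ι" => NormedSpace.inclusionInDoubleDual ℂ _

section BidualCharacter

variable {A : Type*} [NonUnitalNormedRing A] [NormedSpace ℂ A]
  [IsScalarTower ℂ A A] [SMulCommClass ℂ A A] {ψ : Dual' A}

theorem inclusionInDoubleDual_mul_s12 (a b : A) : ι a * ι b = ι (a * b) := by
  ext f; rfl

theorem piStar_eq_smul_of_map_mul (hψ : ∀ a b : A, ψ (a * b) = ψ a * ψ b) (a : A) :
    piStar ψ a = ψ a • ψ := by
  ext b; simp [hψ]

theorem bidual_mul_apply_of_map_mul (hψ : ∀ a b : A, ψ (a * b) = ψ a * ψ b)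
    (G R : Bidual A) : (G * R) ψ = G ψ * R ψ := by
  have : arensAux R ψ = R ψ • ψ := by
    ext a; simp [piStar_eq_smul_of_map_mul hψ, mul_comm]
  rw [arens_mul_apply, this, map_smul, smul_eq_mul, mul_comm]

variable (ψ) in
/-- `tensorExtension ψ f` is `f ⊗ ψ̃`. -/
def tensorExtension : Dual' A →L[ℂ] BilForm (Bidual A) :=
  (smulRightL ℂ (Bidual A) (Dual' (Bidual A))).flip (ι ψ) ∘L ι

@[simp] theorem tensorExtension_apply (f : Dual' A) (F G : Bidual A) :
    tensorExtension ψ f F G = F f * G ψ :=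
  rfl

theorem tensorExtension_self (hψ : ∀ a b : A, ψ (a * b) = ψ a * ψ b) :
    tensorExtension ψ ψ = piStar (ι ψ) := by
  ext F G
  simp [bidual_mul_apply_of_map_mul hψ]

theorem bilLeft_tensorExtension (hψ : ∀ a b : A, ψ (a * b) = ψ a * ψ b) (f : Dual' A)
    (R : Bidual A) : bilLeft R (tensorExtension ψ f) = R ψ • tensorExtension ψ f := by
  ext F G
  simp [bidual_mul_apply_of_map_mul hψ]
  ring

theorem bilRight_inclusionInDoubleDual_tensorExtension (f : Dual' A) (w : A) :
    bilRight (ι w) (tensorExtension ψ f) = tensorExtension ψ (piStar f w) :=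
  rfl

namespace IsBimodMorphism

variable {ρ : BilForm (Bidual A) →L[ℂ] Dual' (Bidual A)}

theorem tensorExtension_mul (hρ : IsBimodMorphism ρ) (hψ : ∀ a b : A, ψ (a * b) = ψ a * ψ b)
    (f : Dual' A) (W R : Bidual A) :
    ρ (tensorExtension ψ f) (W * R) = ρ (tensorExtension ψ f) W * R ψ := by
  have h := congrArg (· W) (hρ R (tensorExtension ψ f)).1
  simp only [bilLeft_tensorExtension hψ, map_smul, dualLeft_apply] at h
  rw [← h, smul_apply, smul_eq_mul, mul_comm]

theorem tensorExtension_piStar (hρ : IsBimodMorphism ρ) (f : Dual' A) (w : A) (W : Bidual A) :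
    ρ (tensorExtension ψ (piStar f w)) W = ρ (tensorExtension ψ f) (ι w * W) := by
  rw [← bilRight_inclusionInDoubleDual_tensorExtension, (hρ (ι w) (tensorExtension ψ f)).2,
    dualRight_apply]

end IsBimodMorphism

end BidualCharacter

section Triangular

variable {A B X : Type*} [NonUnitalNormedRing A] [NormedSpace ℂ A]
  [NonUnitalNormedRing B] [NormedSpace ℂ B] [NormedAddCommGroup X] [NormedSpace ℂ X]

namespace Tri

def iX : X →L[ℂ] Tri A X B :=
  LinearMap.mkContinuous
    { toFun x := ⟨0, x, 0⟩
      map_add' _ _ := Tri.ext (add_zero 0).symm rfl (add_zero 0).symm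
      map_smul' c _ := Tri.ext (smul_zero c).symm rfl (smul_zero c).symm }
    1 fun x => show ‖(0 : A)‖ + ‖x‖ + ‖(0 : B)‖ ≤ 1 * ‖x‖ by simp

def iB : B →L[ℂ] Tri A X B :=
  LinearMap.mkContinuous
    { toFun b := ⟨0, 0, b⟩
      map_add' _ _ := Tri.ext (add_zero 0).symm (add_zero 0).symm rfl
      map_smul' c _ := Tri.ext (smul_zero c).symm (smul_zero c).symm rfl }
    1 fun b => show ‖(0 : A)‖ + ‖(0 : X)‖ + ‖b‖ ≤ 1 * ‖b‖ by simp

def projX : Tri A X B →L[ℂ] X :=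
  LinearMap.mkContinuous
    { toFun t := t.x
      map_add' _ _ := rfl
      map_smul' _ _ := rfl }
    1 fun t => show ‖t.x‖ ≤ 1 * (‖t.a‖ + ‖t.x‖ + ‖t.b‖) by
      linarith [norm_nonneg t.a, norm_nonneg t.b]

@[simp] theorem iX_apply (x : X) : (iX x : Tri A X B) = ⟨0, x, 0⟩ := rfl
@[simp] theorem iB_apply (b : B) : (iB b : Tri A X B) = ⟨0, 0, b⟩ := rfl
@[simp] theorem projX_apply (t : Tri A X B) : projX t = t.x := rfl

end Tri

open Tri

variable [IsScalarTower ℂ A A] [SMulCommClass ℂ A A] [IsScalarTower ℂ B B] [SMulCommClass ℂ B B]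

@[simp] theorem triCharacter_apply (φ : B →L[ℂ] ℂ) (t : Tri A X B) :
    triCharacter φ t = φ t.b :=
  rfl

variable [BanachBimodule A B X] {φ : B →L[ℂ] ℂ}

theorem triCharacter_mul (hφ : ∀ b b' : B, φ (b * b') = φ b * φ b') (s t : Tri A X B) :
    triCharacter φ (s * t) = triCharacter φ s * triCharacter φ t := by
  simp [hφ]

theorem apply_iX_eq_zero
    (hAX : (Submodule.span ℂ {y : X | ∃ (a : A) (x : X), y = lAct A B X a x}).topologicalClosure
      = ⊤)
    {g : Dual' (Bidual (Tri A X B))}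
    (hg : ∀ W R : Bidual (Tri A X B), g (W * R) = g W * R (triCharacter φ)) (x : X) :
    g (ι (iX x)) = 0 := by
  refine (g ∘L ι ∘L iX).map_eq_zero_of_mem_closure_span ?_ (hAX ▸ Submodule.mem_top)
  rintro _ ⟨a, x, rfl⟩
  have : (iX (lAct A B X a x) : Tri A X B) = ⟨a, 0, 0⟩ * iX x := by ext <;> simp
  simp [this, ← inclusionInDoubleDual_mul_s12, hg]

theorem apply_iB_eq_zero
    (hker : (Submodule.span ℂ {y : B | ∃ b k : B, φ k = 0 ∧ y = b * k}).topologicalClosure =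
      LinearMap.ker (φ : B →ₗ[ℂ] ℂ))
    {g : Dual' (Bidual (Tri A X B))}
    (hg : ∀ W R : Bidual (Tri A X B), g (W * R) = g W * R (triCharacter φ))
    {u : B} (hu : φ u = 0) : g (ι (iB (A := A) (X := X) u)) = 0 := by
  refine (g ∘L ι ∘L iB).map_eq_zero_of_mem_closure_span ?_ (by rwa [hker])
  rintro _ ⟨b, k, hk, rfl⟩
  have : (iB (b * k) : Tri A X B) = iB b * iB k := by ext <;> simp
  simp [this, ← inclusionInDoubleDual_mul_s12, hg, hk]

end Triangular

section Cases

variable {A B X : Type*}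
  [NonUnitalNormedRing A] [NormedSpace ℂ A] [IsScalarTower ℂ A A] [SMulCommClass ℂ A A]
  [NonUnitalNormedRing B] [NormedSpace ℂ B] [IsScalarTower ℂ B B] [SMulCommClass ℂ B B]
  [NormedAddCommGroup X] [NormedSpace ℂ X] [BanachBimodule A B X]
  {φ : B →L[ℂ] ℂ} {ρ : BilForm (Bidual (Tri A X B)) →L[ℂ] Dual' (Bidual (Tri A X B))}

open Tri

theorem leftPhiAmenable_of_isBimodMorphism (hφ : ∀ b b' : B, φ (b * b') = φ b * φ b')
    (hker : (Submodule.span ℂ {y : B | ∃ b k : B, φ k = 0 ∧ y = b * k}).topologicalClosure =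
      LinearMap.ker (φ : B →ₗ[ℂ] ℂ))
    (hρ : IsBimodMorphism ρ) (b₀ : B)
    (hb₀ : ρ (piStar (ι (triCharacter φ))) (ι (iB b₀)) ≠ 0) : LeftPhiAmenable φ := by
  set c := ρ (piStar (ι (triCharacter φ))) (ι (iB b₀))
  set m : Bidual B := ContinuousLinearMap.apply ℂ ℂ (ι (iB b₀)) ∘L ρ ∘L
    tensorExtension (triCharacter φ) ∘L (compL ℂ (Tri A X B) B ℂ).flip projB
  refine ⟨c⁻¹ • m, fun b => ?_, ?_⟩
  · ext h
    set g := ρ (tensorExtension (triCharacter φ) (h ∘L projB))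
    have hg : ∀ W R, g (W * R) = g W * R (triCharacter φ) :=
      hρ.tensorExtension_mul (triCharacter_mul hφ) _
    have hm : m (dualRight b h) = g (ι (iB (A := A) (X := X) (b * b₀))) := by
      have : dualRight b h ∘L projB = piStar (h ∘L projB) (iB (A := A) (X := X) b) := by
        ext t; simp
      calc m (dualRight b h)
          = ρ (tensorExtension (triCharacter φ) (piStar (h ∘L projB) (iB b))) (ι (iB b₀)) := by
            simp [m, this]
        _ = g (ι (iB (b * b₀))) := by
            rw [hρ.tensorExtension_piStar, inclusionInDoubleDual_mul_s12]; congr 2; ext <;> simp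
    have hker' : g (ι (iB (A := A) (X := X) (b * b₀ - φ b • b₀))) = 0 :=
      apply_iB_eq_zero hker hg (by simp [hφ])
    simp only [map_sub, map_smul, smul_eq_mul, sub_eq_zero] at hker'
    change c⁻¹ * m (dualRight b h) = φ b * (c⁻¹ * g (ι (iB b₀)))
    rw [hm, hker']
    ring
  · have : m φ = c := by
      change ρ (tensorExtension _ (triCharacter φ)) _ = _
      rw [tensorExtension_self (triCharacter_mul hφ)]
    rw [smul_apply, this, smul_eq_mul, inv_mul_cancel₀ hb₀]

theorem IsBimodMorphism.apply_eq_zero_of_rightCharacter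
    (hφ : ∀ b b' : B, φ (b * b') = φ b * φ b')
    (hAX : (Submodule.span ℂ {y : X | ∃ (a : A) (x : X), y = lAct A B X a x}).topologicalClosure
      = ⊤)
    {η : X →L[ℂ] ℂ} (hη : η ≠ 0) (hηφ : ∀ (b : B) (x : X), η (rAct A B X b x) = φ b * η x)
    (hρ : IsBimodMorphism ρ) (t : Tri A X B) :
    ρ (piStar (ι (triCharacter φ))) (ι t) = 0 := by
  obtain ⟨x₀, hx₀⟩ : ∃ x, η x ≠ 0 := DFunLike.ne_iff.1 hη
  have hpi : piStar (η ∘L projX) (iX x₀) = η x₀ • triCharacter (A := A) (X := X) φ := by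
    ext s; simp [hηφ, mul_comm]
  have key := hρ.tensorExtension_piStar (ψ := triCharacter φ) (η ∘L projX) (iX x₀) (ι t)
  rw [hpi, map_smul, tensorExtension_self (triCharacter_mul hφ), map_smul,
    inclusionInDoubleDual_mul_s12,
    show (iX x₀ * t : Tri A X B) = iX (rAct A B X t.b x₀) by ext <;> simp,
    apply_iX_eq_zero hAX (hρ.tensorExtension_mul (triCharacter_mul hφ) _)] at key
  simpa [hx₀] using key

end Cases

open Tri in
theorem statement12_general (A B X : Type*)
    [NonUnitalNormedRing A] [NormedSpace ℂ A] [IsScalarTower ℂ A A] [SMulCommClass ℂ A A]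
    [NonUnitalNormedRing B] [NormedSpace ℂ B] [IsScalarTower ℂ B B] [SMulCommClass ℂ B B]
    [NormedAddCommGroup X] [NormedSpace ℂ X]
    [BanachBimodule A B X]
    (hAX : (Submodule.span ℂ {y : X | ∃ (a : A) (x : X), y = lAct A B X a x}).topologicalClosure
      = ⊤)
    (φ : B →L[ℂ] ℂ) (hφ : IsCharacter φ)
    (hker : (Submodule.span ℂ {y : B | ∃ b k : B, φ k = 0 ∧ y = b * k}).topologicalClosure =
      LinearMap.ker (φ : B →ₗ[ℂ] ℂ))
    (hcases : ¬ LeftPhiAmenable φ ∨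
      ∃ η : X →L[ℂ] ℂ, η ≠ 0 ∧ ∀ (b : B) (x : X), η (rAct A B X b x) = φ b * η x) :
    ¬ ApproximatelyBiflat (Bidual (Tri A X B)) := by
  rintro ⟨l, hl, hρ, hconv⟩
  obtain ⟨b₀, hb₀⟩ : ∃ b, φ b = 1 := by
    obtain ⟨b, hb⟩ : ∃ b, φ b ≠ 0 := DFunLike.ne_iff.1 hφ.1
    exact ⟨(φ b)⁻¹ • b, by simp [hb]⟩
  have hlim : Tendsto (fun ρ => ρ (piStar (ι (triCharacter φ))) (ι (iB (A := A) (X := X) b₀)))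
      l (𝓝 1) := by
    simpa [hb₀] using hconv (ι (triCharacter φ)) (ι (iB b₀))
  rcases hcases with hφ_amen | ⟨η, hη, hηφ⟩
  · obtain ⟨ρ, hρ, hne⟩ := (hρ.and (hlim.eventually_ne one_ne_zero)).exists
    exact hφ_amen (leftPhiAmenable_of_isBimodMorphism hφ.2 hker hρ b₀ hne)
  · have hzero : Tendsto
        (fun ρ => ρ (piStar (ι (triCharacter φ))) (ι (iB (A := A) (X := X) b₀))) l (𝓝 0) :=
      tendsto_const_nhds.congr' <| hρ.mono fun ρ hρ =>
        (hρ.apply_eq_zero_of_rightCharacter hφ.2 hAX hη hηφ _).symm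
    exact one_ne_zero (tendsto_nhds_unique hlim hzero)

/-- Let `T = Tri(A,X,B)` be a triangular Banach algebra with
`closure(A²) = A` and `closure(A·X) = X`, and let `φ ∈ Δ(B)` satisfy
`closure(B · ker φ) = ker φ`.  If either (i) `B` is not left `φ`-amenable, or (ii) `X` admits
a right `φ`-character, then `T**` (with the first Arens product) is not approximately biflat. -/
theorem statement12 (A B X : Type*)
    [NonUnitalNormedRing A] [NormedSpace ℂ A] [IsScalarTower ℂ A A] [SMulCommClass ℂ A A]
    [CompleteSpace A]
    [NonUnitalNormedRing B] [NormedSpace ℂ B] [IsScalarTower ℂ B B] [SMulCommClass ℂ B B]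
    [CompleteSpace B]
    [NormedAddCommGroup X] [NormedSpace ℂ X] [CompleteSpace X]
    [BanachBimodule A B X]
    (hA2 : (Submodule.span ℂ {y : A | ∃ a a' : A, y = a * a'}).topologicalClosure = ⊤)
    (hAX : (Submodule.span ℂ {y : X | ∃ (a : A) (x : X), y = lAct A B X a x}).topologicalClosure
      = ⊤)
    (φ : B →L[ℂ] ℂ) (hφ : IsCharacter φ)
    (hker : (Submodule.span ℂ {y : B | ∃ b k : B, φ k = 0 ∧ y = b * k}).topologicalClosure =
      LinearMap.ker (φ : B →ₗ[ℂ] ℂ))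
    (hcases : ¬ LeftPhiAmenable φ ∨
      ∃ η : X →L[ℂ] ℂ, η ≠ 0 ∧ ∀ (b : B) (x : X), η (rAct A B X b x) = φ b * η x) :
    ¬ ApproximatelyBiflat (Bidual (Tri A X B)) :=
  statement12_general A B X hAX φ hφ hker hcases

end ApproxBiflat
end
end
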